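/- Fix an even integer κ ≥ 4 and an odd integer n ≥ 1. Let E > 0 and let X₀, …, X_{n+1} be real numbers satisfying: T_κ(X_q) = T_κ(X_{n−q}) for q = 0, 1, …, (n−1)/2; X_{1+q}·X_{n−q} = E for q = −1, 0, …, (n−1)/2; X_q ∈ (−1,1)∖{0} and U_{κ−1}(X_q) ≠ 0 for q = 0, 1, …, (n−1)/2; and X_{n+1} ∈ {cos(lπ/κ) : 0 ≤ l ≤ κ}∖{0}. Then for every j ∈ ℕ*: g_{jκ}^E(X_{(n+1)/2}) = Σ_{q=0}^{(n−1)/2} ω_q · g_{jκ}^E(X_q), where ω_q = 2·(−1)^{(n−1)/2−q} · (∏_{p=q}^{(n−1)/2} X_p)/(∏_{p=(n+1)/2}^{n−q} X_p) · (∏_{p=(n+1)/2}^{n−q} (1−X_p²)·U_{κ−1}(X_p))/(∏_{p=q}^{(n−1)/2} (1−X_p²)·U_{κ−1}(X_p)); in particular the coefficients ω_q do not depend on j. -/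

import Mathlib

open Real

/-- Chebyshev polynomial of the first kind, as a real function. -/
noncomputable def chebT (n : ℕ) (x : ℝ) : ℝ := (Polynomial.Chebyshev.T ℝ n).eval x

/-- Chebyshev polynomial of the second kind, as a real function. -/
noncomputable def chebU (n : ℕ) (x : ℝ) : ℝ := (Polynomial.Chebyshev.U ℝ n).eval x

/-- The function `g_{jκ}^E(x) = (E/x)(1-x²)U_{jκ-1}(x) + x(1-(E/x)²)U_{jκ-1}(E/x)`. -/
noncomputable def g (j κ : ℕ) (E x : ℝ) : ℝ :=
  (E / x) * (1 - x ^ 2) * chebU (j * κ - 1) x + x * (1 - (E / x) ^ 2) * chebU (j * κ - 1) (E / x)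

/-- The coefficients `ω_q` of Proposition `prop1_intro` (odd case). -/
noncomputable def omegaOdd (κ n : ℕ) (X : ℕ → ℝ) (q : ℕ) : ℝ :=
  2 * (-1 : ℝ) ^ ((n - 1) / 2 - q)
    * ((∏ p ∈ Finset.Icc q ((n - 1) / 2), X p)
        / (∏ p ∈ Finset.Icc ((n + 1) / 2) (n - q), X p))
    * ((∏ p ∈ Finset.Icc ((n + 1) / 2) (n - q), (1 - X p ^ 2) * chebU (κ - 1) (X p))
        / (∏ p ∈ Finset.Icc q ((n - 1) / 2), (1 - X p ^ 2) * chebU (κ - 1) (X p)))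

/-!
Put `F(x) = (1 - x²) U_{κ-1}(x)` and `u_p = U_{j-1}(T_κ(X_p))`. Since
`U_{jκ-1} = (U_{j-1} ∘ T_κ) · U_{κ-1}` and `E / X_q = X_{n+1-q}`, we get
`g_{jκ}^E(X_q) = X_{n+1-q} F(X_q) u_q + X_q F(X_{n+1-q}) u_{n+1-q}`. The symmetry
`T_κ(X_q) = T_κ(X_{n-q})` turns `u_{n+1-q}` into `u_{q-1}`, and `F(X_{n+1}) = 0` because `X_{n+1}`
is a node `cos(lπ/κ)`. So both sides are combinations of `u_0, …, u_{(n-1)/2}` with coefficients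
independent of `j`, and the `ω_q` solve the resulting triangular system: in the sum the
coefficients of `u_q` cancel for `q < (n-1)/2`, and the one of `u_{(n-1)/2}` is that of the
left-hand side.
-/

open Finset

namespace Polynomial.Chebyshev

variable (R : Type*) [CommRing R]

theorem T_mul_U (m k : ℤ) : 2 * T R k * U R m = U R (m + k) + U R (m - k) := by
  induction k using Polynomial.Chebyshev.induct with
  | zero => simp [two_mul]
  | one => rw [T_one]; linear_combination (norm := ring_nf) -(U_add_one R m)
  | add_two k ih1 ih2 =>
    have h₁ := U_add_two R (m + k)
    have h₂ := U_sub_two R (m - k)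
    have h₃ := T_add_two R k
    linear_combination (norm := ring_nf) 2 * U R m * h₃ - h₂ - h₁ - ih2 + 2 * (X : R[X]) * ih1
  | neg_add_one k ih1 ih2 =>
    have h₁ := U_add_two R (m + (-k - 1))
    have h₂ := U_sub_two R (m - (-k - 1))
    have h₃ := T_add_two R (-k - 1)
    linear_combination (norm := ring_nf) 2 * U R m * h₃ - h₂ - h₁ - ih2 + 2 * (X : R[X]) * ih1

theorem U_mul_sub_one (m n : ℤ) :
    U R (m * n - 1) = (U R (m - 1)).comp (T R n) * U R (n - 1) := by
  induction m using Polynomial.Chebyshev.induct with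
  | zero => simp
  | one => simp
  | add_two m ih1 ih2 =>
    have h₁ := T_mul_U R ((m + 1) * n - 1) n
    have h₂ := congr_arg (comp · (T R n)) <| U_add_two R (m - 1)
    simp only [sub_comp, mul_comp, ofNat_comp, X_comp] at h₂
    linear_combination (norm := ring_nf) -ih2 - U R (n - 1) * h₂ - h₁ + 2 * T R n * ih1
  | neg_add_one m ih1 ih2 =>
    have h₁ := T_mul_U R (-m * n - 1) n
    have h₂ := congr_arg (comp · (T R n)) <| U_add_two R (-m - 2)
    simp only [sub_comp, mul_comp, ofNat_comp, X_comp] at h₂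
    linear_combination (norm := ring_nf) -ih2 - U R (n - 1) * h₂ - h₁ + 2 * T R n * ih1

end Polynomial.Chebyshev

theorem Finset.sum_range_succ_mul_add_mul_pred {R : Type*} [CommRing R] (c d u : ℕ → R) {k : ℕ}
    (h₀ : c 0 = 0) (h : ∀ r < k, d r + c (r + 1) = 0) :
    ∑ q ∈ range (k + 1), (d q * u q + c q * u (q - 1)) = d k * u k := by
  induction k with
  | zero => simp [h₀]
  | succ k ih =>
    rw [sum_range_succ, ih fun r hr => h r (by omega), add_tsub_cancel_right]
    linear_combination u k * h k k.lt_succ_self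

/-- `U_{j-1}(T_κ(x))`: the only factor of `g_{jκ}^E` that depends on `j`. -/
noncomputable def chebUT (j κ : ℕ) (x : ℝ) : ℝ :=
  (Polynomial.Chebyshev.U ℝ ((j : ℤ) - 1)).eval (chebT κ x)

lemma chebU_mul_sub_one {j κ : ℕ} (hj : 1 ≤ j) (hκ : 1 ≤ κ) (x : ℝ) :
    chebU (j * κ - 1) x = chebUT j κ x * chebU (κ - 1) x := by
  have hjκ : 1 ≤ j * κ := Nat.one_le_iff_ne_zero.mpr (by positivity)
  simp only [chebU, chebUT, chebT, Nat.cast_sub hjκ, Nat.cast_sub hκ, Nat.cast_mul, Nat.cast_one,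
    Polynomial.Chebyshev.U_mul_sub_one, Polynomial.eval_mul, Polynomial.eval_comp]

/-- At `x = cos θ` this is `sin θ · sin κθ`, so it vanishes at the nodes `cos (lπ/κ)`. -/
noncomputable def chebF (κ : ℕ) (x : ℝ) : ℝ := (1 - x ^ 2) * chebU (κ - 1) x

lemma chebF_cos_nat_mul_pi_div (κ l : ℕ) : chebF κ (cos (l * π / κ)) = 0 := by
  rcases κ.eq_zero_or_pos with rfl | hκ
  · simp [chebF]
  set θ := l * π / κ
  have hU : chebU (κ - 1) (cos θ) * sin θ = sin (κ * θ) := by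
    simp [chebU, Nat.cast_sub hκ]
  have hκθ : (κ : ℝ) * θ = l * π := by simp only [θ]; field_simp
  rw [chebF, ← sin_sq_add_cos_sq θ, add_sub_cancel_right]
  linear_combination sin θ * hU + sin θ * (congr_arg sin hκθ).trans (sin_nat_mul_pi l)

lemma chebF_ne_zero {κ : ℕ} {x : ℝ} (h₁ : -1 < x) (h₂ : x < 1) (hU : chebU (κ - 1) x ≠ 0) :
    chebF κ x ≠ 0 :=
  mul_ne_zero (by nlinarith) hU

lemma g_eq_of_mul_eq {j κ : ℕ} (hj : 1 ≤ j) (hκ : 1 ≤ κ) {E x y : ℝ} (hxy : x * y = E)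
    (hx : x ≠ 0) :
    g j κ E x = y * chebF κ x * chebUT j κ x + x * chebF κ y * chebUT j κ y := by
  obtain rfl : E / x = y := by rw [← hxy, mul_div_cancel_left₀ y hx]
  rw [g, chebU_mul_sub_one hj hκ, chebU_mul_sub_one hj hκ, chebF, chebF]
  ring

section OmegaOdd

variable {κ k : ℕ} {X : ℕ → ℝ}

lemma omegaOdd_two_mul_add_one (q : ℕ) :
    omegaOdd κ (2 * k + 1) X q = 2 * (-1 : ℝ) ^ (k - q)
      * ((∏ p ∈ Icc q k, X p) / ∏ p ∈ Icc (k + 1) (2 * k + 1 - q), X p)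
      * ((∏ p ∈ Icc (k + 1) (2 * k + 1 - q), chebF κ (X p)) / ∏ p ∈ Icc q k, chebF κ (X p)) := by
  rw [omegaOdd, show (2 * k + 1 - 1) / 2 = k by omega, show (2 * k + 1 + 1) / 2 = k + 1 by omega]
  rfl

lemma omegaOdd_of_lt {q : ℕ} (hq : q < k) :
    omegaOdd κ (2 * k + 1) X q = -omegaOdd κ (2 * k + 1) X (q + 1) * (X q / X (2 * k + 1 - q))
      * (chebF κ (X (2 * k + 1 - q)) / chebF κ (X q)) := by
  have hIcc (f : ℕ → ℝ) : ∏ p ∈ Icc q k, f p = f q * ∏ p ∈ Icc (q + 1) k, f p := by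
    rw [← insert_Icc_add_one_left_eq_Icc hq.le, prod_insert (by simp)]
  have hIcc' (f : ℕ → ℝ) : ∏ p ∈ Icc (k + 1) (2 * k + 1 - q), f p
      = (∏ p ∈ Icc (k + 1) (2 * k + 1 - (q + 1)), f p) * f (2 * k + 1 - q) := by
    rw [show 2 * k + 1 - q = 2 * k + 1 - (q + 1) + 1 by omega, prod_Icc_succ_top (by omega)]
  have hsign : (-1 : ℝ) ^ (k - q) = -(-1) ^ (k - (q + 1)) := by
    rw [show k - q = k - (q + 1) + 1 by omega, pow_succ]; ring
  simp only [omegaOdd_two_mul_add_one, hIcc, hIcc', hsign, div_eq_mul_inv, mul_inv]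
  ring

lemma omegaOdd_self :
    omegaOdd κ (2 * k + 1) X k = 2 * (X k / X (k + 1)) * (chebF κ (X (k + 1)) / chebF κ (X k)) := by
  simp [omegaOdd_two_mul_add_one, show 2 * k + 1 - k = k + 1 by omega]

end OmegaOdd

section OddSystem

variable {j κ k : ℕ} {E : ℝ} {X : ℕ → ℝ}

lemma omegaOdd_mul_add_omegaOdd_succ_mul (hE : E ≠ 0)
    (hP : ∀ q ≤ k + 1, X q * X (2 * k + 2 - q) = E) (hF : ∀ q ≤ k, chebF κ (X q) ≠ 0) {r : ℕ}
    (hr : r < k) :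
    omegaOdd κ (2 * k + 1) X r * (X (2 * k + 2 - r) * chebF κ (X r))
      + omegaOdd κ (2 * k + 1) X (r + 1) * (X (r + 1) * chebF κ (X (2 * k + 2 - (r + 1)))) = 0 := by
  have h₁ := hP r (by omega)
  have h₂ := hP (r + 1) (by omega)
  rw [show 2 * k + 2 - (r + 1) = 2 * k + 1 - r by omega] at h₂ ⊢
  have hX := right_ne_zero_of_mul (h₂ ▸ hE)
  have hFr := hF r hr.le
  rw [omegaOdd_of_lt hr]
  field_simp
  linear_combination omegaOdd κ (2 * k + 1) X (r + 1) * chebF κ (X (2 * k + 1 - r)) * (h₂ - h₁)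

lemma omegaOdd_self_mul (hE : E ≠ 0) (hP : ∀ q ≤ k + 1, X q * X (2 * k + 2 - q) = E)
    (hF : chebF κ (X k) ≠ 0) :
    omegaOdd κ (2 * k + 1) X k * (X (2 * k + 2 - k) * chebF κ (X k))
      = 2 * X (k + 1) * chebF κ (X (k + 1)) := by
  have h₁ := hP k (by omega)
  have h₂ := hP (k + 1) le_rfl
  rw [show 2 * k + 2 - k = k + 2 by omega] at h₁ ⊢
  rw [show 2 * k + 2 - (k + 1) = k + 1 by omega] at h₂
  have hX := left_ne_zero_of_mul (h₂ ▸ hE)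
  rw [omegaOdd_self]
  field_simp
  linear_combination chebF κ (X (k + 1)) * (h₁ - h₂)

lemma g_eq_of_odd_system (hj : 1 ≤ j) (hκ : 1 ≤ κ) (hE : E ≠ 0)
    (hP : ∀ q ≤ k + 1, X q * X (2 * k + 2 - q) = E)
    (hT : ∀ q ≤ k, chebT κ (X q) = chebT κ (X (2 * k + 1 - q)))
    (hnode : chebF κ (X (2 * k + 2)) = 0) {q : ℕ} (hq : q ≤ k + 1) :
    g j κ E (X q) = X (2 * k + 2 - q) * chebF κ (X q) * chebUT j κ (X q)
      + X q * chebF κ (X (2 * k + 2 - q)) * chebUT j κ (X (q - 1)) := by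
  rw [g_eq_of_mul_eq hj hκ (hP q hq) (left_ne_zero_of_mul (hP q hq ▸ hE))]
  rcases q with _ | q
  · simp [hnode]
  · rw [show 2 * k + 2 - (q + 1) = 2 * k + 1 - q by omega, chebUT, chebUT, ← hT q (by omega)]
    rfl

lemma g_center_eq (hj : 1 ≤ j) (hκ : 1 ≤ κ) (hE : E ≠ 0)
    (hP : ∀ q ≤ k + 1, X q * X (2 * k + 2 - q) = E)
    (hT : ∀ q ≤ k, chebT κ (X q) = chebT κ (X (2 * k + 1 - q)))
    (hnode : chebF κ (X (2 * k + 2)) = 0) :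
    g j κ E (X (k + 1)) = 2 * X (k + 1) * chebF κ (X (k + 1)) * chebUT j κ (X k) := by
  have hsym : chebUT j κ (X (k + 1)) = chebUT j κ (X k) := by
    rw [chebUT, chebUT, hT k le_rfl, show 2 * k + 1 - k = k + 1 by omega]
  rw [g_eq_of_odd_system hj hκ hE hP hT hnode le_rfl, show 2 * k + 2 - (k + 1) = k + 1 by omega,
    hsym, Nat.add_sub_cancel]
  ring

lemma sum_omegaOdd_mul_g (hj : 1 ≤ j) (hκ : 1 ≤ κ) (hE : E ≠ 0)
    (hP : ∀ q ≤ k + 1, X q * X (2 * k + 2 - q) = E)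
    (hT : ∀ q ≤ k, chebT κ (X q) = chebT κ (X (2 * k + 1 - q)))
    (hnode : chebF κ (X (2 * k + 2)) = 0) (hF : ∀ q ≤ k, chebF κ (X q) ≠ 0) :
    ∑ q ∈ range (k + 1), omegaOdd κ (2 * k + 1) X q * g j κ E (X q)
      = 2 * X (k + 1) * chebF κ (X (k + 1)) * chebUT j κ (X k) := by
  rw [← omegaOdd_self_mul hE hP (hF k le_rfl), ← sum_range_succ_mul_add_mul_pred
    (fun q => omegaOdd κ (2 * k + 1) X q * (X q * chebF κ (X (2 * k + 2 - q))))
    (fun q => omegaOdd κ (2 * k + 1) X q * (X (2 * k + 2 - q) * chebF κ (X q)))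
    (fun q => chebUT j κ (X q)) (by simp [hnode])
    fun r hr => omegaOdd_mul_add_omegaOdd_succ_mul hE hP hF hr]
  refine sum_congr rfl fun q hq => ?_
  rw [g_eq_of_odd_system hj hκ hE hP hT hnode (by simp at hq; omega)]
  ring

end OddSystem

theorem omega_representation_odd_general (κ n : ℕ) (hκ : 4 ≤ κ)
    (hno : Odd n) (E : ℝ) (hE : 0 < E) (X : ℕ → ℝ)
    (hT : ∀ q ≤ (n - 1) / 2, chebT κ (X q) = chebT κ (X (n - q)))
    (hP : ∀ q ≤ (n + 1) / 2, X q * X (n + 1 - q) = E)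
    (hX : ∀ q ≤ (n - 1) / 2, (-1 < X q ∧ X q < 1 ∧ X q ≠ 0) ∧ chebU (κ - 1) (X q) ≠ 0)
    (hlast : (∃ l : ℕ, l ≤ κ ∧ X (n + 1) = Real.cos (l * π / κ)) ∧ X (n + 1) ≠ 0) :
    ∀ j : ℕ, 1 ≤ j →
      g j κ E (X ((n + 1) / 2)) =
        ∑ q ∈ Finset.range ((n + 1) / 2), omegaOdd κ n X q * g j κ E (X q) := by
  intro j hj
  obtain ⟨k, rfl⟩ := hno
  rw [show (2 * k + 1 + 1) / 2 = k + 1 by omega] at hP ⊢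
  rw [show (2 * k + 1 - 1) / 2 = k by omega] at hT hX
  have hnode : chebF κ (X (2 * k + 2)) = 0 := by
    obtain ⟨⟨l, -, hl⟩, -⟩ := hlast
    exact hl ▸ chebF_cos_nat_mul_pi_div κ l
  have hF (q : ℕ) (hq : q ≤ k) : chebF κ (X q) ≠ 0 :=
    chebF_ne_zero (hX q hq).1.1 (hX q hq).1.2.1 (hX q hq).2
  rw [g_center_eq hj (by omega) hE.ne' hP hT hnode,
    sum_omegaOdd_mul_g hj (by omega) hE.ne' hP hT hnode hF]

/-- If `E > 0` and `X₀,…,X_{n+1}` solve the odd system, then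
`g_{jκ}^E(X_{(n+1)/2}) = Σ_{q=0}^{(n-1)/2} ω_q g_{jκ}^E(X_q)` for every `j ≥ 1`,
with coefficients `ω_q` independent of `j`. -/
theorem omega_representation_odd (κ n : ℕ) (hκ : 4 ≤ κ) (hke : Even κ)
    (hn : 1 ≤ n) (hno : Odd n) (E : ℝ) (hE : 0 < E) (X : ℕ → ℝ)
    (hT : ∀ q ≤ (n - 1) / 2, chebT κ (X q) = chebT κ (X (n - q)))
    (hP : ∀ q ≤ (n + 1) / 2, X q * X (n + 1 - q) = E)
    (hX : ∀ q ≤ (n - 1) / 2, (-1 < X q ∧ X q < 1 ∧ X q ≠ 0) ∧ chebU (κ - 1) (X q) ≠ 0)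
    (hlast : (∃ l : ℕ, l ≤ κ ∧ X (n + 1) = Real.cos (l * π / κ)) ∧ X (n + 1) ≠ 0) :
    ∀ j : ℕ, 1 ≤ j →
      g j κ E (X ((n + 1) / 2)) =
        ∑ q ∈ Finset.range ((n + 1) / 2), omegaOdd κ n X q * g j κ E (X q) :=
  omega_representation_odd_general κ n hκ hno E hE X hT hP hX hlast
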